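/- Let G be a tree of order m ≥ 3 and n > 1. Then χ_ld(G[\overline{K_n}]) = 2 if and only if G is a star K_{1,m-1}. -/

import Mathlib

open Finset

open Classical in
/-- The weight of a vertex: sum of labels of its neighbors. -/
noncomputable def ldWeight {V : Type*} (G : SimpleGraph V) [Fintype V] (f : V → ℕ) (v : V) : ℕ :=
  ∑ x ∈ Finset.univ, if G.Adj v x then f x else 0

/-- `f` is a local distance antimagic labeling of `G`: a bijection onto `{1,…,|V|}`
with adjacent vertices getting distinct weights. -/
def IsLDAL {V : Type*} (G : SimpleGraph V) [Fintype V] (f : V → ℕ) : Prop :=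
  Set.BijOn f Set.univ (Set.Icc 1 (Fintype.card V)) ∧
    ∀ ⦃u v : V⦄, G.Adj u v → ldWeight G f u ≠ ldWeight G f v

/-- The local distance antimagic chromatic number: minimum number of distinct weights. -/
noncomputable def chiLD {V : Type*} (G : SimpleGraph V) [Fintype V] : ℕ :=
  sInf {k | ∃ f : V → ℕ, IsLDAL G f ∧ (Finset.univ.image (ldWeight G f)).card = k}

/-- The join `G + H` of two graphs. -/
def graphJoin {α β : Type*} (G : SimpleGraph α) (H : SimpleGraph β) :
    SimpleGraph (α ⊕ β) where
  Adj x y :=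
    match x, y with
    | Sum.inl a, Sum.inl b => G.Adj a b
    | Sum.inr a, Sum.inr b => H.Adj a b
    | Sum.inl _, Sum.inr _ => True
    | Sum.inr _, Sum.inl _ => True
  symm.symm := by
    rintro (a | a) (b | b) h
    exacts [G.adj_symm h, trivial, trivial, H.adj_symm h]
  loopless.irrefl := by
    rintro (a | a) h
    exacts [G.loopless.irrefl a h, H.loopless.irrefl a h]

/-- The lexicographic product `G[H]`. -/
def lexProd {α β : Type*} (G : SimpleGraph α) (H : SimpleGraph β) :
    SimpleGraph (α × β) where
  Adj x y := G.Adj x.1 y.1 ∨ (x.1 = y.1 ∧ H.Adj x.2 y.2)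
  symm.symm := by
    rintro x y (h | ⟨e, h⟩)
    exacts [Or.inl h.symm, Or.inr ⟨e.symm, h.symm⟩]
  loopless.irrefl := by
    rintro x (h | ⟨e, h⟩)
    exacts [G.loopless.irrefl _ h, H.loopless.irrefl _ h]

/-- The friendship graph `F_n`: `n` triangles sharing the central vertex `none`. -/
def friendship (n : ℕ) : SimpleGraph (Option (Fin n × Fin 2)) where
  Adj x y := x ≠ y ∧ (x = none ∨ y = none ∨ ∃ i a b, x = some (i, a) ∧ y = some (i, b))
  symm.symm := by
    rintro x y ⟨hne, h⟩
    refine ⟨hne.symm, ?_⟩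
    rcases h with h | h | ⟨i, a, b, hx, hy⟩
    · exact Or.inr (Or.inl h)
    · exact Or.inl h
    · exact Or.inr (Or.inr ⟨i, b, a, hy, hx⟩)
  loopless.irrefl := fun x h => h.1 rfl

/-- The bistar `B_{n,n}`: two adjacent centers, each with `n` leaves. -/
def bistar (n : ℕ) : SimpleGraph (Bool ⊕ Bool × Fin n) where
  Adj x y :=
    match x, y with
    | Sum.inl a, Sum.inl b => a ≠ b
    | Sum.inl a, Sum.inr (c, _) => a = c
    | Sum.inr (c, _), Sum.inl a => a = c
    | Sum.inr _, Sum.inr _ => False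
  symm.symm := by
    rintro (a | ⟨c, i⟩) (b | ⟨d, j⟩) h
    exacts [h.symm, h, h, h.elim]
  loopless.irrefl := by
    rintro (a | ⟨c, i⟩) h
    exacts [h rfl, h]

/-!
In `G[K̄ₙ]` the weight of `(a, i)` is the weight of `a` in `G` for the fibre sums
`F b = ∑ⱼ f (b, j)`, so only `G` matters. A tree that is not a star has a leaf `u` whose
neighbour `x` has a neighbour `y` with a further neighbour; then `N(u) ⊊ N(y)`, so
`w(u) < w(y)` (the fibre sums are positive), while both differ from `w(x)`: three weights.
For a star with centre `c`, labelling the fibre of `c` with `1, …, n` makes `F c` smaller than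
every other fibre sum, so the weight of the centre exceeds the common weight `F c` of the
leaves: two weights.
-/

namespace SimpleGraph

variable {V : Type*} {G : SimpleGraph V}

lemma neighborSet_starGraph_of_ne {c a : V} (ha : a ≠ c) : (starGraph c).neighborSet a = {c} := by
  ext w
  simp only [mem_neighborSet, starGraph_adj, ha, false_or, Set.mem_singleton_iff,
    and_iff_right_iff_imp]
  rintro rfl
  exact ha

lemma IsAcyclic.eq_starGraph_of_isUniversal {c : V} (hG : G.IsAcyclic) (hc : G.IsUniversal c) :
    G = starGraph c := by
  classical
  ext u v
  rw [starGraph_adj]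
  refine ⟨fun h => ⟨h.ne, ?_⟩, ?_⟩
  · by_contra! huv
    exact hG.cliqueFree le_rfl ({c, u, v} : Finset V)
      (is3Clique_triple_iff.mpr ⟨hc (Ne.symm huv.1), hc (Ne.symm huv.2), h⟩)
  · rintro ⟨huv, rfl | rfl⟩
    exacts [hc huv, (hc huv.symm).symm]

-- For a leaf `u` with non-universal neighbour `x`, take `y` to be the second vertex of a path
-- from `x` to a non-neighbour of `x`.
lemma IsTree.exists_eq_starGraph_or_neighborSet_ssubset [Fintype V] [Nontrivial V]
    (hG : G.IsTree) :
    (∃ c, G = starGraph c) ∨ ∃ u x y, G.Adj u x ∧ G.neighborSet u ⊂ G.neighborSet y := by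
  classical
  obtain ⟨u, hu⟩ := hG.exists_vert_degree_one_of_nontrivial
  obtain ⟨x, hux, hx⟩ := degree_eq_one_iff_existsUnique_adj.mp hu
  have hNu : G.neighborSet u = {x} := Set.ext fun w => ⟨hx w, fun h => h ▸ hux⟩
  by_cases hxc : G.IsUniversal x
  · exact Or.inl ⟨x, hG.isAcyclic.eq_starGraph_of_isUniversal hxc⟩
  obtain ⟨v, hxv, hnadj⟩ : ∃ v, x ≠ v ∧ ¬ G.Adj x v := by simpa [IsUniversal] using hxc
  obtain ⟨p, hp⟩ := hG.connected.exists_isPath x v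
  match p, hp with
  | .nil, _ => exact absurd rfl hxv
  | .cons hxv' .nil, _ => exact absurd hxv' hnadj
  | .cons (v := y) hxy (.cons hyz r), hp =>
    refine Or.inr ⟨u, x, y, hux, ?_⟩
    rw [hNu, Set.ssubset_iff_of_subset (by simpa using hxy.symm)]
    refine ⟨_, hyz, fun hzx => ?_⟩
    rw [Set.mem_singleton_iff] at hzx
    subst hzx
    exact ((Walk.cons_isPath_iff _ _).mp hp).2 (by simp)

lemma completeBipartiteGraph_fin_one_adj_iff {β : Type*} {c : V} (E : V ≃ Fin 1 ⊕ β)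
    (hE : ∀ v, (E v).isLeft ↔ v = c) (u v : V) :
    (completeBipartiteGraph (Fin 1) β).Adj (E u) (E v) ↔ (starGraph c).Adj u v := by
  have hu := hE u
  have hv := hE v
  rcases hEu : E u with i | i <;> rcases hEv : E v with j | j <;>
    grind [starGraph_adj, completeBipartiteGraph_adj]

lemma nonempty_iso_completeBipartiteGraph_fin_one_iff [Fintype V] :
    Nonempty (G ≃g completeBipartiteGraph (Fin 1) (Fin (Fintype.card V - 1))) ↔
      ∃ c, G = starGraph c := by
  classical
  constructor
  · rintro ⟨e⟩
    have hE (w : V) : (e w).isLeft ↔ w = e.symm (.inl 0) := by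
      rw [RelIso.eq_symm_apply]
      rcases e w with i | i <;> simp [Fin.fin_one_eq_zero]
    refine ⟨e.symm (.inl 0), ?_⟩
    ext u v
    rw [← e.map_adj_iff]
    exact completeBipartiteGraph_fin_one_adj_iff e.toEquiv hE u v
  · rintro ⟨c, rfl⟩
    have hcard : Fintype.card {v // ¬ v = c} = Fintype.card V - 1 := by
      rw [Fintype.card_subtype_compl, Fintype.card_subtype_eq]
    let E : V ≃ Fin 1 ⊕ Fin (Fintype.card V - 1) :=
      (Equiv.sumCompl (· = c)).symm.trans
        (Equiv.sumCongr (Equiv.ofUnique _ _) (Fintype.equivFinOfCardEq hcard))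
    refine ⟨⟨E, (completeBipartiteGraph_fin_one_adj_iff E (fun v => ?_) _ _)⟩⟩
    by_cases hv : v = c <;> simp [E, Equiv.sumCompl, hv]

end SimpleGraph

open SimpleGraph

lemma Set.bijOn_val_add_one_Icc {α : Type*} [Fintype α] {k : ℕ} (ε : α ≃ Fin k) :
    Set.BijOn (fun a => (ε a : ℕ) + 1) Set.univ (Set.Icc 1 (Fintype.card α)) := by
  rw [Fintype.card_congr ε, Fintype.card_fin]
  refine ⟨fun a _ => ⟨Nat.le_add_left _ _, (ε a).isLt⟩,
    fun a _ b _ h => ε.injective (Fin.ext ?_), fun m hm => ⟨ε.symm ⟨m - 1, by grind⟩, trivial, ?_⟩⟩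
  · simpa using h
  · simp only [Equiv.apply_symm_apply]
    grind

section Weights

variable {V : Type*} [Fintype V] {G : SimpleGraph V} {F : V → ℕ}

lemma ldWeight_eq_sum_neighborFinset [DecidableRel G.Adj] (F : V → ℕ) (v : V) :
    ldWeight G F v = ∑ w ∈ G.neighborFinset v, F w := by
  rw [ldWeight, neighborFinset_eq_filter, Finset.sum_filter]
  congr!

lemma le_ldWeight_of_adj {v w : V} (h : G.Adj v w) : F w ≤ ldWeight G F v := by
  classical
  rw [ldWeight_eq_sum_neighborFinset]
  exact Finset.single_le_sum (fun _ _ => Nat.zero_le _) (by simpa using h)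

lemma ldWeight_eq_of_neighborSet_eq_singleton {v w : V} (h : G.neighborSet v = {w}) :
    ldWeight G F v = F w := by
  classical
  rw [ldWeight_eq_sum_neighborFinset, ← Finset.sum_singleton F w]
  congr 1
  rw [← Finset.coe_inj, coe_neighborFinset, h, Finset.coe_singleton]

lemma ldWeight_lt_of_neighborSet_ssubset (hF : ∀ v, 0 < F v) {u y : V}
    (h : G.neighborSet u ⊂ G.neighborSet y) : ldWeight G F u < ldWeight G F y := by
  classical
  obtain ⟨z, hzy, hzu⟩ := Set.exists_of_ssubset h
  rw [ldWeight_eq_sum_neighborFinset, ldWeight_eq_sum_neighborFinset]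
  refine Finset.sum_lt_sum_of_subset ?_ (i := z) (by simpa using hzy) (by simpa using hzu)
    (hF z) (fun _ _ _ => Nat.zero_le _)
  rw [← Finset.coe_subset, coe_neighborFinset, coe_neighborFinset]
  exact h.subset

lemma three_le_card_image_ldWeight (hF : ∀ v, 0 < F v)
    (hne : ∀ ⦃a b⦄, G.Adj a b → ldWeight G F a ≠ ldWeight G F b) {u x y : V}
    (hux : G.Adj u x) (hsub : G.neighborSet u ⊂ G.neighborSet y) :
    3 ≤ #(univ.image (ldWeight G F)) := by
  have hyx : G.Adj y x := hsub.subset hux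
  have hlt := ldWeight_lt_of_neighborSet_ssubset hF hsub
  calc 3 = #{ldWeight G F u, ldWeight G F x, ldWeight G F y} :=
        (Finset.card_eq_three.mpr ⟨_, _, _, hne hux, hlt.ne, hne hyx |>.symm, rfl⟩).symm
    _ ≤ #(univ.image (ldWeight G F)) := Finset.card_le_card (by simp [Finset.insert_subset_iff])

end Weights

section LexProd

variable {V β : Type*} {G : SimpleGraph V}

@[simp]
lemma lexProd_bot_adj {a b : V} {i j : β} :
    (lexProd G (⊥ : SimpleGraph β)).Adj (a, i) (b, j) ↔ G.Adj a b := by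
  simp [lexProd]

variable [Fintype β]

def fiberSum (f : V × β → ℕ) (a : V) : ℕ := ∑ j, f (a, j)

lemma fiberSum_pos [Nonempty β] {f : V × β → ℕ} (hf : ∀ p, 0 < f p) (a : V) :
    0 < fiberSum f a :=
  Finset.sum_pos (fun j _ => hf (a, j)) univ_nonempty

variable [Fintype V]

lemma ldWeight_lexProd_bot (f : V × β → ℕ) (a : V) (i : β) :
    ldWeight (lexProd G (⊥ : SimpleGraph β)) f (a, i) = ldWeight G (fiberSum f) a := by
  classical
  simp only [ldWeight, fiberSum, Fintype.sum_prod_type, lexProd_bot_adj, Finset.sum_ite_irrel,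
    Finset.sum_const_zero]

lemma image_ldWeight_lexProd_bot [Nonempty β] (f : V × β → ℕ) :
    univ.image (ldWeight (lexProd G (⊥ : SimpleGraph β)) f) =
      univ.image (ldWeight G (fiberSum f)) := by
  ext k
  simp [ldWeight_lexProd_bot]

end LexProd

section ChiLD

variable {V : Type*} [Fintype V] {G : SimpleGraph V} {f : V → ℕ}

lemma IsLDAL.pos (hf : IsLDAL G f) (v : V) : 0 < f v :=
  (hf.1.mapsTo (Set.mem_univ v)).1

lemma IsLDAL.two_le_card_image (hf : IsLDAL G f) {u v : V} (h : G.Adj u v) :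
    2 ≤ #(univ.image (ldWeight G f)) :=
  Finset.one_lt_card.mpr ⟨_, mem_image_of_mem _ (mem_univ u), _, mem_image_of_mem _ (mem_univ v),
    hf.2 h⟩

lemma chiLD_eq_of_isLDAL {k : ℕ} (hf : IsLDAL G f) (hk : #(univ.image (ldWeight G f)) ≤ k)
    (hmin : ∀ f', IsLDAL G f' → k ≤ #(univ.image (ldWeight G f'))) : chiLD G = k := by
  have hkf := le_antisymm hk (hmin f hf)
  refine le_antisymm (Nat.sInf_le ⟨f, hf, hkf⟩) (le_csInf ⟨k, f, hf, hkf⟩ ?_)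
  rintro _ ⟨f', hf', rfl⟩
  exact hmin f' hf'

-- `chiLD G = 0` also when `G` has no labeling at all, since `sInf ∅ = 0`.
lemma exists_isLDAL_of_chiLD_eq {k : ℕ} (h : chiLD G = k) (hk : k ≠ 0) :
    ∃ f, IsLDAL G f ∧ #(univ.image (ldWeight G f)) = k := by
  have hne : {k | ∃ f, IsLDAL G f ∧ #(univ.image (ldWeight G f)) = k}.Nonempty := by
    by_contra hempty
    rw [Set.not_nonempty_iff_eq_empty] at hempty
    exact hk (by rw [← h, chiLD, hempty, Nat.sInf_empty])
  exact h ▸ Nat.sInf_mem hne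

end ChiLD

section Theorems

variable {V β : Type*} [Fintype V] [Fintype β] [Nonempty β] {G : SimpleGraph V}

theorem chiLD_lexProd_bot_ne_two {u x y : V} (hux : G.Adj u x)
    (hsub : G.neighborSet u ⊂ G.neighborSet y) :
    chiLD (lexProd G (⊥ : SimpleGraph β)) ≠ 2 := by
  intro h
  obtain ⟨f, hf, hcard⟩ := exists_isLDAL_of_chiLD_eq h two_ne_zero
  obtain ⟨i⟩ := ‹Nonempty β›
  have hne ⦃a b : V⦄ (hab : G.Adj a b) :
      ldWeight G (fiberSum f) a ≠ ldWeight G (fiberSum f) b := by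
    simpa only [ldWeight_lexProd_bot] using hf.2 ((lexProd_bot_adj (i := i) (j := i)).mpr hab)
  have := three_le_card_image_ldWeight (fiberSum_pos hf.pos) hne hux hsub
  rw [← image_ldWeight_lexProd_bot, hcard] at this
  omega

theorem chiLD_lexProd_bot_starGraph [Nontrivial V] (c : V) :
    chiLD (lexProd (starGraph c) (⊥ : SimpleGraph β)) = 2 := by
  classical
  set G := starGraph c
  obtain ⟨g, hgc⟩ : ∃ g : V ≃ Fin (Fintype.card V), (g c : ℕ) = 0 := by
    let g₀ := Fintype.equivFin V
    exact ⟨g₀.trans (Equiv.swap (g₀ c) ⟨0, Fintype.card_pos⟩), by simp⟩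
  let ε : V × β ≃ Fin (Fintype.card V * Fintype.card β) :=
    (g.prodCongr (Fintype.equivFin β)).trans finProdFinEquiv
  let f : V × β → ℕ := fun p => (ε p : ℕ) + 1
  have hfiber {a : V} (ha : a ≠ c) : fiberSum f c < fiberSum f a := by
    refine Finset.sum_lt_sum_of_nonempty univ_nonempty fun j _ => ?_
    have hga : (g a : ℕ) ≠ 0 := fun h => ha (g.injective (Fin.ext (h.trans hgc.symm)))
    have := Nat.mul_pos (Fintype.card_pos (α := β)) (Nat.pos_of_ne_zero hga)
    simp [f, ε, hgc]
    omega
  have hleaf {a : V} (ha : a ≠ c) : ldWeight G (fiberSum f) a = fiberSum f c :=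
    ldWeight_eq_of_neighborSet_eq_singleton (neighborSet_starGraph_of_ne ha)
  have hcenter {a : V} (ha : a ≠ c) : fiberSum f c < ldWeight G (fiberSum f) c :=
    (hfiber ha).trans_le (le_ldWeight_of_adj (starGraph_center_adj ha.symm))
  have hf : IsLDAL (lexProd G ⊥) f := by
    refine ⟨Set.bijOn_val_add_one_Icc ε, ?_⟩
    rintro ⟨a, i⟩ ⟨b, j⟩ hab
    rw [ldWeight_lexProd_bot, ldWeight_lexProd_bot]
    obtain ⟨hne, rfl | rfl⟩ := starGraph_adj.mp (lexProd_bot_adj.mp hab)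
    · rw [hleaf hne.symm]
      exact (hcenter hne.symm).ne'
    · rw [hleaf hne]
      exact (hcenter hne).ne
  obtain ⟨a, ha⟩ := exists_ne c
  obtain ⟨i⟩ := ‹Nonempty β›
  refine chiLD_eq_of_isLDAL hf ?_ fun f' hf' => hf'.two_le_card_image
    ((lexProd_bot_adj (i := i) (j := i)).mpr (starGraph_center_adj ha.symm))
  rw [image_ldWeight_lexProd_bot]
  calc #(univ.image (ldWeight G (fiberSum f)))
      ≤ #{ldWeight G (fiberSum f) c, fiberSum f c} := by
        refine Finset.card_le_card fun k hk => ?_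
        obtain ⟨b, -, rfl⟩ := Finset.mem_image.mp hk
        by_cases hb : b = c
        · simp [hb]
        · simp [hleaf hb]
    _ ≤ 2 := Finset.card_le_two

end Theorems

theorem stmt_17 {V : Type*} [Fintype V] (G : SimpleGraph V) (n m : ℕ)
    (hn : 1 < n) (hm : 3 ≤ m) (hcard : Fintype.card V = m) (htree : G.IsTree) :
    chiLD (lexProd G (⊥ : SimpleGraph (Fin n))) = 2 ↔
      Nonempty (G ≃g completeBipartiteGraph (Fin 1) (Fin (m - 1))) := by
  have : Nonempty (Fin n) := ⟨⟨0, by omega⟩⟩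
  have : Nontrivial V := Fintype.one_lt_card_iff_nontrivial.mp (by omega)
  subst hcard
  rw [nonempty_iso_completeBipartiteGraph_fin_one_iff]
  constructor
  · intro h
    rcases htree.exists_eq_starGraph_or_neighborSet_ssubset with hstar | ⟨u, x, y, hux, hsub⟩
    · exact hstar
    · exact absurd h (chiLD_lexProd_bot_ne_two hux hsub)
  · rintro ⟨c, rfl⟩
    exact chiLD_lexProd_bot_starGraph c
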